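/- arXiv:1711.02432 — 7 statements merged into one kernel-verified Lean document; each statement's English description precedes it below -/
import Mathlib

section
/- Let K be a field of characteristic 0 and L = K(∛b) for some b ∈ K that is not a cube in K. Then every element ξ ∈ L can be written in the form ξ = (α + β∛b)/(γ + δ∛b) with α, β, γ, δ ∈ K and (γ, δ) ≠ (0,0). -/
/-!
Since `[L : K] ≤ 3`, the four elements `1, r, ξ, ξ r` satisfy a nontrivial `K`-linear relation
`a + b' r + γ ξ + δ ξ r = 0`, i.e. `ξ (γ + δ r) = -(a + b' r)`. As `b` is not a cube, `r ∉ K`, so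
`1, r` are linearly independent: this forces `(γ, δ) ≠ (0, 0)` and then `γ + δ r ≠ 0`.
-/

open Polynomial Module

section

variable {K L : Type*} [Field K] [Field L] [Algebra K L]

theorem algebraMap_add_algebraMap_mul_ne_zero {r : L} (hr : r ∉ Set.range (algebraMap K L))
    {γ δ : K} (hγδ : (γ, δ) ≠ (0, 0)) : algebraMap K L γ + algebraMap K L δ * r ≠ 0 := by
  intro h
  rcases eq_or_ne δ 0 with rfl | hδ
  · exact hγδ (by simpa using h)
  · refine hr ⟨-γ / δ, ?_⟩
    rw [map_div₀, map_neg, div_eq_iff (by simpa using hδ)]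
    linear_combination -h

theorem exists_eq_div_of_finrank_le_three [FiniteDimensional K L] (hL : finrank K L ≤ 3)
    {r : L} (hr : r ∉ Set.range (algebraMap K L)) (ξ : L) :
    ∃ α β γ δ : K, (γ, δ) ≠ (0, 0) ∧
      ξ = (algebraMap K L α + algebraMap K L β * r) /
          (algebraMap K L γ + algebraMap K L δ * r) := by
  have hdep : ¬ LinearIndependent K ![1, r, ξ, ξ * r] := fun h => by
    simpa using h.fintype_card_le_finrank.trans hL
  obtain ⟨g, hg, i, hi⟩ := Fintype.not_linearIndependent_iff.mp hdep
  simp only [Fin.sum_univ_four, Matrix.cons_val, Algebra.smul_def, mul_one] at hg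
  have hden : (g 2, g 3) ≠ (0, 0) := by
    intro h23
    obtain ⟨h2, h3⟩ := Prod.mk.inj h23
    have h01 : (g 0, g 1) = (0, 0) := by
      by_contra h01
      refine algebraMap_add_algebraMap_mul_ne_zero hr h01 ?_
      simpa [h2, h3] using hg
    obtain ⟨h0, h1⟩ := Prod.mk.inj h01
    fin_cases i <;> simp_all
  refine ⟨-g 0, -g 1, g 2, g 3, hden, ?_⟩
  rw [eq_div_iff (algebraMap_add_algebraMap_mul_ne_zero hr hden)]
  simp only [map_neg]
  linear_combination hg

theorem finrank_le_natDegree_of_adjoin_eq_top {S : Type*} [CommRing S] [Algebra K S] {r : S}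
    (hgen : Algebra.adjoin K {r} = ⊤) {p : K[X]} (hp : p.Monic) (hpr : aeval r p = 0) :
    finrank K S ≤ p.natDegree := by
  have hint : IsIntegral K r := ⟨p, hp, hpr⟩
  rw [(PowerBasis.ofAdjoinEqTop hint hgen).finrank, PowerBasis.ofAdjoinEqTop_dim]
  exact natDegree_le_natDegree (minpoly.min K r hp hpr)

end

theorem stmt_0_general (K L : Type*) [Field K] [Field L] [Algebra K L]
    (b : K) (hb : ¬ ∃ c : K, c ^ 3 = b)
    (r : L) (hr : r ^ 3 = algebraMap K L b)
    (hgen : Algebra.adjoin K {r} = ⊤) (ξ : L) :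
    ∃ α β γ δ : K, (γ, δ) ≠ (0, 0) ∧
      ξ = (algebraMap K L α + algebraMap K L β * r) /
          (algebraMap K L γ + algebraMap K L δ * r) := by
  have hmonic : (X ^ 3 - C b).Monic := monic_X_pow_sub_C b three_ne_zero
  have hroot : aeval r (X ^ 3 - C b) = 0 := by simp [hr]
  have := (PowerBasis.ofAdjoinEqTop ⟨_, hmonic, hroot⟩ hgen).finite
  have hr_notin : r ∉ Set.range (algebraMap K L) := by
    rintro ⟨c, rfl⟩
    exact hb ⟨c, (algebraMap K L).injective (by rw [map_pow, hr])⟩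
  refine exists_eq_div_of_finrank_le_three ?_ hr_notin ξ
  simpa using finrank_le_natDegree_of_adjoin_eq_top hgen hmonic hroot

/-- Every element of `L = K(∛b)` can be written as `(α + β∛b)/(γ + δ∛b)`
with `α, β, γ, δ ∈ K` and `(γ, δ) ≠ (0,0)`. -/
theorem stmt_0 (K L : Type*) [Field K] [CharZero K] [Field L] [Algebra K L]
    (b : K) (hb : ¬ ∃ c : K, c ^ 3 = b)
    (r : L) (hr : r ^ 3 = algebraMap K L b)
    (hgen : Algebra.adjoin K {r} = ⊤) (ξ : L) :
    ∃ α β γ δ : K, (γ, δ) ≠ (0, 0) ∧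
      ξ = (algebraMap K L α + algebraMap K L β * r) /
          (algebraMap K L γ + algebraMap K L δ * r) :=
  stmt_0_general K L b hb r hr hgen ξ
end

section
/- Let K be a field of characteristic 0 and b ∈ K not a cube, L = K(∛b). For a ∈ K×, the element a is a norm from L to K if and only if the projective surface V_{a,b} : x₁³ + a·x₂³ + b·x₃³ + a·b·x₄³ = 0 in P³ has a K-rational point. -/
/-!
In the basis `1, r, r²` of `L`, the norm of `u + v r + w r²` is
`u³ + b v³ + b² w³ - 3 b u v w`, and the norm of `x + y r` is `x³ + b y³`, which vanishes only
for `x = y = 0` because `b` is not a cube. A point of `V_{a,b}` therefore exhibits `a` as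
`N(-(x₁ + x₃ r) / (x₂ + x₄ r))`. Conversely, if `a = N(ξ)` with `ξ = u + v r + w r²`,
then `ξ (-v + w r) = -((u v - b w²) + (v² - u w) r)` is linear in `r`, and taking norms shows
that `(u v - b w², -v, v² - u w, w)` lies on `V_{a,b}`.
-/

open Polynomial

theorem cube_add_mul_cube_eq_zero_iff {K : Type*} [Field K] {b x y : K}
    (hb : ¬∃ c : K, c ^ 3 = b) : x ^ 3 + b * y ^ 3 = 0 ↔ x = 0 ∧ y = 0 := by
  refine ⟨fun h => ?_, by rintro ⟨rfl, rfl⟩; ring⟩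
  obtain rfl : y = 0 := by
    by_contra hy
    exact hb ⟨-x / y, by field_simp; linear_combination -h⟩
  exact ⟨by simpa using h, rfl⟩

theorem exists_cubic_surface_point_of_eq {R : Type*} [CommRing R] [Nontrivial R]
    {a b u v w : R} (h : u ^ 3 + b * v ^ 3 + b ^ 2 * w ^ 3 - 3 * b * u * v * w = a) :
    ∃ x₁ x₂ x₃ x₄ : R, ¬ (x₁ = 0 ∧ x₂ = 0 ∧ x₃ = 0 ∧ x₄ = 0) ∧
      x₁ ^ 3 + a * x₂ ^ 3 + b * x₃ ^ 3 + a * b * x₄ ^ 3 = 0 := by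
  by_cases hvw : v = 0 ∧ w = 0
  · obtain ⟨rfl, rfl⟩ := hvw
    exact ⟨u, -1, 0, 0, by simp, by linear_combination h⟩
  · refine ⟨u * v - b * w ^ 2, -v, v ^ 2 - u * w, w, ?_,
      by linear_combination (v ^ 3 - b * w ^ 3) * h⟩
    rintro ⟨-, hv, -, hw⟩
    exact hvw ⟨neg_eq_zero.mp hv, hw⟩

section PureCubicExtension

variable {K L : Type*} [Field K] [Field L] [Algebra K L] {b : K} {r : L}

theorem minpoly_eq_X_pow_sub_C_of_prime {p : ℕ} (hp : p.Prime) (hb : ¬∃ c : K, c ^ p = b)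
    (hr : r ^ p = algebraMap K L b) : minpoly K r = X ^ p - C b :=
  (minpoly.eq_of_irreducible_of_monic
    (X_pow_sub_C_irreducible_of_prime hp fun c hc => hb ⟨c, hc⟩) (by simp [hr])
    (monic_X_pow_sub_C b hp.ne_zero)).symm

noncomputable def cubeRootBasis (hb : ¬∃ c : K, c ^ 3 = b) (hr : r ^ 3 = algebraMap K L b)
    (hgen : Algebra.adjoin K {r} = ⊤) : Module.Basis (Fin 3) K L :=
  (PowerBasis.ofAdjoinEqTop (IsIntegral.of_pow three_pos (hr ▸ isIntegral_algebraMap))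
    hgen).basis.reindex
      (finCongr (by simp [minpoly_eq_X_pow_sub_C_of_prime Nat.prime_three hb hr]))

theorem cubeRootBasis_apply (hb : ¬∃ c : K, c ^ 3 = b) (hr : r ^ 3 = algebraMap K L b)
    (hgen : Algebra.adjoin K {r} = ⊤) (i : Fin 3) :
    cubeRootBasis hb hr hgen i = r ^ (i : ℕ) := by
  rw [cubeRootBasis, Module.Basis.reindex_apply, PowerBasis.coe_basis]
  rfl

theorem cubeRootBasis_equivFun_symm (hb : ¬∃ c : K, c ^ 3 = b) (hr : r ^ 3 = algebraMap K L b)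
    (hgen : Algebra.adjoin K {r} = ⊤) (u v w : K) :
    (cubeRootBasis hb hr hgen).equivFun.symm ![u, v, w] =
      algebraMap K L u + algebraMap K L v * r + algebraMap K L w * r ^ 2 := by
  simp [Module.Basis.equivFun_symm_apply, Fin.sum_univ_three, cubeRootBasis_apply,
    Algebra.smul_def]

theorem exists_eq_algebraMap_add_mul_add_mul_sq (hb : ¬∃ c : K, c ^ 3 = b)
    (hr : r ^ 3 = algebraMap K L b) (hgen : Algebra.adjoin K {r} = ⊤) (θ : L) :
    ∃ u v w : K, θ = algebraMap K L u + algebraMap K L v * r + algebraMap K L w * r ^ 2 := by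
  set B := cubeRootBasis hb hr hgen
  refine ⟨B.equivFun θ 0, B.equivFun θ 1, B.equivFun θ 2, ?_⟩
  rw [← cubeRootBasis_equivFun_symm hb hr hgen]
  conv_lhs => rw [← B.equivFun.symm_apply_apply θ]
  congr 1
  ext i
  fin_cases i <;> rfl

theorem norm_algebraMap_add_mul_add_mul_sq (hb : ¬∃ c : K, c ^ 3 = b)
    (hr : r ^ 3 = algebraMap K L b) (hgen : Algebra.adjoin K {r} = ⊤) (u v w : K) :
    Algebra.norm K (algebraMap K L u + algebraMap K L v * r + algebraMap K L w * r ^ 2) =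
      u ^ 3 + b * v ^ 3 + b ^ 2 * w ^ 3 - 3 * b * u * v * w := by
  set B := cubeRootBasis hb hr hgen
  set ξ := algebraMap K L u + algebraMap K L v * r + algebraMap K L w * r ^ 2
  have h0 : ξ * B 0 = B.equivFun.symm ![u, v, w] := by
    rw [cubeRootBasis_equivFun_symm, cubeRootBasis_apply, Fin.val_zero, pow_zero, mul_one]
  have h1 : ξ * B 1 = B.equivFun.symm ![b * w, u, v] := by
    rw [cubeRootBasis_equivFun_symm, cubeRootBasis_apply, Fin.val_one, map_mul]
    linear_combination algebraMap K L w * hr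
  have h2 : ξ * B 2 = B.equivFun.symm ![b * v, b * w, u] := by
    rw [cubeRootBasis_equivFun_symm, cubeRootBasis_apply, Fin.val_two, map_mul, map_mul]
    linear_combination (algebraMap K L v + algebraMap K L w * r) * hr
  have hmat : Algebra.leftMulMatrix B ξ = !![u, b * w, b * v; v, u, b * w; w, v, u] := by
    ext i j
    rw [Algebra.leftMulMatrix_eq_repr_mul, ← B.equivFun_apply]
    fin_cases j
    all_goals simp only [Fin.zero_eta, Fin.mk_one, Fin.reduceFinMk, h0, h1, h2,
      LinearEquiv.apply_symm_apply]
    all_goals fin_cases i <;> rfl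
  rw [Algebra.norm_eq_matrix_det B, hmat, Matrix.det_fin_three]
  simp only [Matrix.of_apply, Matrix.cons_val', Matrix.cons_val_zero, Matrix.cons_val_one,
    Matrix.cons_val_two, Matrix.empty_val', Matrix.cons_val_fin_one, Matrix.head_cons,
    Matrix.tail_cons, Matrix.head_fin_const]
  ring

theorem exists_norm_eq_of_cubic_surface_point (hb : ¬∃ c : K, c ^ 3 = b)
    (hr : r ^ 3 = algebraMap K L b) (hgen : Algebra.adjoin K {r} = ⊤) {a x₁ x₂ x₃ x₄ : K}
    (hnt : ¬ (x₁ = 0 ∧ x₂ = 0 ∧ x₃ = 0 ∧ x₄ = 0))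
    (heq : x₁ ^ 3 + a * x₂ ^ 3 + b * x₃ ^ 3 + a * b * x₄ ^ 3 = 0) :
    ∃ ξ : L, Algebra.norm K ξ = a := by
  have := Module.Finite.of_basis (cubeRootBasis hb hr hgen)
  have hlin (x y : K) :
      Algebra.norm K (algebraMap K L x + algebraMap K L y * r) = x ^ 3 + b * y ^ 3 := by
    simpa using norm_algebraMap_add_mul_add_mul_sq hb hr hgen x y 0
  have hden : x₂ ^ 3 + b * x₄ ^ 3 ≠ 0 := by
    intro h
    obtain ⟨rfl, rfl⟩ := (cube_add_mul_cube_eq_zero_iff hb).mp h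
    obtain ⟨rfl, rfl⟩ := (cube_add_mul_cube_eq_zero_iff (x := x₁) (y := x₃) hb).mp
      (by linear_combination heq)
    exact hnt ⟨rfl, rfl, rfl, rfl⟩
  refine ⟨(algebraMap K L (-x₁) + algebraMap K L (-x₃) * r) /
    (algebraMap K L x₂ + algebraMap K L x₄ * r), ?_⟩
  rw [div_eq_mul_inv, map_mul, Algebra.norm_inv, hlin, hlin]
  field_simp
  linear_combination -heq

end PureCubicExtension

theorem stmt_1_general (K L : Type*) [Field K] [Field L] [Algebra K L]
    (a b : K) (hb : ¬ ∃ c : K, c ^ 3 = b)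
    (r : L) (hr : r ^ 3 = algebraMap K L b)
    (hgen : Algebra.adjoin K {r} = ⊤) :
    (∃ ξ : L, Algebra.norm K ξ = a) ↔
      ∃ x₁ x₂ x₃ x₄ : K, ¬ (x₁ = 0 ∧ x₂ = 0 ∧ x₃ = 0 ∧ x₄ = 0) ∧
        x₁ ^ 3 + a * x₂ ^ 3 + b * x₃ ^ 3 + a * b * x₄ ^ 3 = 0 := by
  constructor
  · rintro ⟨θ, rfl⟩
    obtain ⟨u, v, w, rfl⟩ := exists_eq_algebraMap_add_mul_add_mul_sq hb hr hgen θ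
    exact exists_cubic_surface_point_of_eq
      (norm_algebraMap_add_mul_add_mul_sq hb hr hgen u v w).symm
  · rintro ⟨x₁, x₂, x₃, x₄, hnt, heq⟩
    exact exists_norm_eq_of_cubic_surface_point hb hr hgen hnt heq

/-- For `a ∈ K×` and `L = K(∛b)`, `a` is a norm from `L` to `K` iff the diagonal
cubic surface `V_{a,b} : x₁³ + a x₂³ + b x₃³ + a b x₄³ = 0` has a `K`-rational point. -/
theorem stmt_1 (K L : Type*) [Field K] [CharZero K] [Field L] [Algebra K L]
    [FiniteDimensional K L]
    (a b : K) (ha : a ≠ 0) (hb0 : b ≠ 0) (hb : ¬ ∃ c : K, c ^ 3 = b)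
    (r : L) (hr : r ^ 3 = algebraMap K L b)
    (hgen : Algebra.adjoin K {r} = ⊤) :
    (∃ ξ : L, Algebra.norm K ξ = a) ↔
      ∃ x₁ x₂ x₃ x₄ : K, ¬ (x₁ = 0 ∧ x₂ = 0 ∧ x₃ = 0 ∧ x₄ = 0) ∧
        x₁ ^ 3 + a * x₂ ^ 3 + b * x₃ ^ 3 + a * b * x₄ ^ 3 = 0 :=
  stmt_1_general K L a b hb r hr hgen
end

section
/- Let K be a field with a primitive p-th root of unity ζ_p (p prime), let b ∈ K× be a non-p-th-power, L = K(b^{1/p}) with Galois group generated by γ, and let A(χ,b) be the cyclic algebra ⊕_{i=0}^{p−1} L·vⁱ with v^p = b and v·x = γ(x)·v for x ∈ L. If b is a norm from L to K, then A(χ,b) is isomorphic to the matrix algebra Mat_p(K). -/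
open Polynomial Module
open scoped Pointwise

/-!
If `b = N(ξ)`, the operator `V = ξ · γ` on `L` satisfies `V x = γ(x) V` and
`V ^ p = ξ γ(ξ) ⋯ γ^(p-1)(ξ) = N(ξ) = b`, so `End_K(L) ≅ Mat_p(K)`, with `L` acting by
multiplication, is a second model of the relations of `A`. In any such model the sums
`∑_{j<p} x_j w^j` are multiplied by one and the same rule. They exhaust `A` because `A` is
generated by `f(L)` and `v`, and `v ^ p = b` brings every power of `v` back to `j < p`. In
`End_K(L)` they are linearly independent by Dedekind's independence of the characters `γ^j`.
Both algebras have dimension `p²`, so both parametrisations are bijective, and composing one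
with the inverse of the other is a `K`-algebra isomorphism.
-/

section CyclicPresentation

variable {K L B : Type*} [Field K] [Field L] [Algebra K L] [Ring B] [Algebra K B] {p : ℕ}
  {γ : L ≃ₐ[K] L} {g : L →ₐ[K] B} {w : B}

theorem pow_mul_map_eq_of_mul_map_eq (h : ∀ x, w * g x = g (γ x) * w) (n : ℕ) (x : L) :
    w ^ n * g x = g ((γ ^ n) x) * w ^ n := by
  induction n generalizing x with
  | zero => simp
  | succ n ih =>
    rw [pow_succ, mul_assoc, h, ← mul_assoc, ih, mul_assoc, ← pow_succ, pow_succ γ,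
      AlgEquiv.mul_apply]

theorem map_mul_pow_mul_map_mul_pow (h : ∀ x, w * g x = g (γ x) * w) (x y : L) (m n : ℕ) :
    g x * w ^ m * (g y * w ^ n) = g (x * (γ ^ m) y) * w ^ (m + n) := by
  rw [mul_assoc, ← mul_assoc (w ^ m), pow_mul_map_eq_of_mul_map_eq h, map_mul, pow_add]
  simp only [mul_assoc]

variable (p g w) in
def cyclicSum : (Fin p → L) →ₗ[K] B :=
  ∑ j : Fin p, LinearMap.mulRight K (w ^ (j : ℕ)) ∘ₗ g.toLinearMap ∘ₗ LinearMap.proj j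

theorem cyclicSum_apply (u : Fin p → L) : cyclicSum p g w u = ∑ j, g (u j) * w ^ (j : ℕ) := by
  simp [cyclicSum]

theorem cyclicSum_single (j : Fin p) (x : L) :
    cyclicSum p g w (Pi.single j x) = g x * w ^ (j : ℕ) := by
  rw [cyclicSum_apply, Finset.sum_eq_single j (fun i _ hij => by simp [hij]) (by simp)]
  simp

theorem map_mul_pow_eq_cyclicSum_single [NeZero p] {b : K} (hw : w ^ p = algebraMap K B b)
    (x : L) (n : ℕ) :
    g x * w ^ n = cyclicSum p g w
      (Pi.single ⟨n % p, Nat.mod_lt _ (NeZero.pos p)⟩ (x * algebraMap K L (b ^ (n / p)))) := by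
  have hn : w ^ n = algebraMap K B (b ^ (n / p)) * w ^ (n % p) := by
    rw [map_pow, ← hw, ← pow_mul, ← pow_add, Nat.div_add_mod]
  rw [cyclicSum_single, hn, map_mul, AlgHom.commutes, mul_assoc]

theorem cyclicSum_mul_cyclicSum (h : ∀ x, w * g x = g (γ x) * w) (u u' : Fin p → L) :
    cyclicSum p g w u * cyclicSum p g w u' =
      ∑ i, ∑ j, g (u i * (γ ^ (i : ℕ)) (u' j)) * w ^ ((i : ℕ) + j) := by
  rw [cyclicSum_apply, cyclicSum_apply, Finset.sum_mul_sum]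
  exact Finset.sum_congr rfl fun i _ => Finset.sum_congr rfl fun j _ =>
    map_mul_pow_mul_map_mul_pow h _ _ _ _

theorem cyclicSum_surjective [NeZero p] {b : K} (h : ∀ x, w * g x = g (γ x) * w)
    (hw : w ^ p = algebraMap K B b) (hgen : Algebra.adjoin K (Set.range g ∪ {w}) = ⊤) :
    Function.Surjective (cyclicSum p g w) := by
  set S : Set B := {y | ∃ x n, g x * w ^ n = y}
  have hS : Submodule.span K S ≤ LinearMap.range (cyclicSum p g w) := by
    rw [Submodule.span_le]
    rintro _ ⟨x, n, rfl⟩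
    exact ⟨_, (map_mul_pow_eq_cyclicSum_single hw x n).symm⟩
  have hmul : S * S ⊆ S := by
    rintro _ ⟨_, ⟨x, m, rfl⟩, _, ⟨y, n, rfl⟩, rfl⟩
    exact ⟨x * (γ ^ m) y, m + n, (map_mul_pow_mul_map_mul_pow h x y m n).symm⟩
  intro y
  refine hS ?_
  have hy : y ∈ Algebra.adjoin K (Set.range g ∪ {w}) := hgen ▸ Algebra.mem_top
  induction hy using Algebra.adjoin_induction with
  | mem z hz =>
    obtain ⟨x, rfl⟩ | rfl := hz
    · exact Submodule.subset_span ⟨x, 0, by simp⟩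
    · exact Submodule.subset_span ⟨1, 1, by simp⟩
  | algebraMap c => exact Submodule.subset_span ⟨algebraMap K L c, 0, by simp⟩
  | add _ _ _ _ hx hy => exact add_mem hx hy
  | mul _ _ _ _ hx hy =>
    exact Submodule.span_mono hmul (Submodule.span_mul_span K S S ▸ Submodule.mul_mem_mul hx hy)

theorem cyclicSum_bijective_of_surjective [FiniteDimensional K L]
    (hsurj : Function.Surjective (cyclicSum p g w)) (hdim : finrank K B = p * finrank K L) :
    Function.Bijective (cyclicSum p g w) := by
  have := Module.Finite.of_surjective _ hsurj
  have hdim' : finrank K (Fin p → L) = finrank K B := by simp [Module.finrank_pi_fintype, hdim]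
  exact ⟨(LinearMap.injective_iff_surjective_of_finrank_eq_finrank hdim').2 hsurj, hsurj⟩

end CyclicPresentation

theorem nonempty_algEquiv_of_bijective_cyclicSum {K L B C : Type*} [Field K] [Field L]
    [Algebra K L] [Ring B] [Algebra K B] [Ring C] [Algebra K C] {p : ℕ} [NeZero p] {b : K}
    {γ : L ≃ₐ[K] L} {g : L →ₐ[K] B} {w : B} {g' : L →ₐ[K] C} {w' : C}
    (h : ∀ x, w * g x = g (γ x) * w) (hw : w ^ p = algebraMap K B b)
    (h' : ∀ x, w' * g' x = g' (γ x) * w') (hw' : w' ^ p = algebraMap K C b)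
    (hB : Function.Bijective (cyclicSum p g w)) (hC : Function.Bijective (cyclicSum p g' w')) :
    Nonempty (B ≃ₐ[K] C) := by
  let e := (LinearEquiv.ofBijective _ hB).symm ≪≫ₗ LinearEquiv.ofBijective _ hC
  have he (u : Fin p → L) : e (cyclicSum p g w u) = cyclicSum p g' w' u := by
    simp [e, LinearEquiv.ofBijective_symm_apply_apply]
  have he_monomial (x : L) (n : ℕ) : e (g x * w ^ n) = g' x * w' ^ n := by
    rw [map_mul_pow_eq_cyclicSum_single hw, map_mul_pow_eq_cyclicSum_single hw', he]
  refine ⟨AlgEquiv.ofLinearEquiv e (by simpa using he_monomial 1 0) fun a a' => ?_⟩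
  obtain ⟨u, rfl⟩ := hB.2 a
  obtain ⟨u', rfl⟩ := hB.2 a'
  simp only [cyclicSum_mul_cyclicSum h, cyclicSum_mul_cyclicSum h', map_sum, he_monomial, he]

section EndModel

variable {K L : Type*} [Field K] [Field L] [Algebra K L] {γ : L ≃ₐ[K] L} {ξ : L}

theorem lmul_mul_toLinearMap_mul_lmul (x : L) :
    Algebra.lmul K L ξ * γ.toLinearMap * Algebra.lmul K L x =
      Algebra.lmul K L (γ x) * (Algebra.lmul K L ξ * γ.toLinearMap) := by
  ext z
  simp only [Module.End.mul_apply, Algebra.coe_lmul_eq_mul, LinearMap.mul_apply',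
    AlgEquiv.toLinearMap_apply, map_mul]
  ring

theorem lmul_mul_toLinearMap_pow_apply (n : ℕ) (z : L) :
    ((Algebra.lmul K L ξ * γ.toLinearMap) ^ n) z =
      (∏ t ∈ Finset.range n, (γ ^ t) ξ) * (γ ^ n) z := by
  induction n generalizing z with
  | zero => simp
  | succ n ih =>
    rw [pow_succ, Module.End.mul_apply, ih, Finset.prod_range_succ, pow_succ γ]
    simp only [Module.End.mul_apply, Algebra.coe_lmul_eq_mul, LinearMap.mul_apply',
      AlgEquiv.toLinearMap_apply, map_mul, AlgEquiv.mul_apply]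
    ring

theorem lmul_mul_toLinearMap_pow_eq_algebraMap {p : ℕ} {b : K} (hγ : γ ^ p = 1)
    (hξ : ∏ t ∈ Finset.range p, (γ ^ t) ξ = algebraMap K L b) :
    (Algebra.lmul K L ξ * γ.toLinearMap) ^ p = algebraMap K (Module.End K L) b := by
  ext z
  rw [lmul_mul_toLinearMap_pow_apply, hξ, hγ, Module.algebraMap_end_apply, Algebra.smul_def]
  rfl

theorem cyclicSum_lmul_apply {p : ℕ} (u : Fin p → L) (z : L) :
    cyclicSum p (Algebra.lmul K L) (Algebra.lmul K L ξ * γ.toLinearMap) u z =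
      ∑ j, (u j * ∏ t ∈ Finset.range j, (γ ^ t) ξ) * (γ ^ (j : ℕ)) z := by
  simp only [cyclicSum_apply, LinearMap.sum_apply, Module.End.mul_apply,
    lmul_mul_toLinearMap_pow_apply]
  simp only [Algebra.coe_lmul_eq_mul, LinearMap.mul_apply', mul_assoc]

theorem cyclicSum_lmul_injective {p : ℕ} (hξ : ξ ≠ 0)
    (hγ : Function.Injective fun j : Fin p => γ ^ (j : ℕ)) :
    Function.Injective (cyclicSum p (Algebra.lmul K L) (Algebra.lmul K L ξ * γ.toLinearMap)) := by
  let σ : Fin p → (L →* L) := fun j => (γ ^ (j : ℕ) : L ≃ₐ[K] L).toMonoidHom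
  have hσ : LinearIndependent L fun j => ⇑(σ j) :=
    (linearIndependent_monoidHom L L).comp σ fun i j hij =>
      hγ (AlgEquiv.ext fun z => DFunLike.congr_fun hij z)
  rw [injective_iff_map_eq_zero]
  intro u hu
  have hsum : ∑ j, (u j * ∏ t ∈ Finset.range j, (γ ^ t) ξ) • ⇑(σ j) = 0 := by
    ext z
    have := LinearMap.congr_fun hu z
    rw [cyclicSum_lmul_apply] at this
    rw [Finset.sum_apply]
    exact this
  have hprod (j : ℕ) : ∏ t ∈ Finset.range j, (γ ^ t) ξ ≠ 0 :=
    Finset.prod_ne_zero_iff.2 fun t _ => (_root_.map_ne_zero _).2 hξ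
  funext j
  exact (mul_eq_zero.1 (Fintype.linearIndependent_iff.1 hσ _ hsum j)).resolve_right (hprod j)

theorem cyclicSum_lmul_bijective [FiniteDimensional K L] {p : ℕ} (hξ : ξ ≠ 0)
    (hγ : Function.Injective fun j : Fin p => γ ^ (j : ℕ)) (hp : finrank K L = p) :
    Function.Bijective
      (cyclicSum p (Algebra.lmul K L) (Algebra.lmul K L ξ * γ.toLinearMap)) := by
  have hinj := cyclicSum_lmul_injective hξ hγ
  have hdim : finrank K (Fin p → L) = finrank K (Module.End K L) := by
    simp [Module.finrank_pi_fintype, Module.finrank_linearMap, hp]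
  exact ⟨hinj, (LinearMap.injective_iff_surjective_of_finrank_eq_finrank hdim).1 hinj⟩

end EndModel

section Kummer

variable {K L : Type*} [Field K] [Field L] [Algebra K L] {n : ℕ} {ζ : K} {b : K} {r : L}

theorem isSplittingField_X_pow_sub_C_of_adjoin_eq_top [NeZero n] (hζ : IsPrimitiveRoot ζ n)
    (hr : r ^ n = algebraMap K L b) (hgen : Algebra.adjoin K {r} = ⊤) :
    IsSplittingField K L (X ^ n - C b) := by
  constructor
  · simpa using X_pow_sub_C_splits_of_isPrimitiveRoot
      (hζ.map_of_injective (algebraMap K L).injective) hr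
  · rw [eq_top_iff, ← hgen]
    refine Algebra.adjoin_mono (Set.singleton_subset_iff.2 ?_)
    rw [mem_rootSet_of_ne (X_pow_sub_C_ne_zero (NeZero.pos n) b)]
    simp [hr]

theorem AlgEquiv.pow_apply_eq_algebraMap_pow_mul {γ : L ≃ₐ[K] L}
    (hγ : γ r = algebraMap K L ζ * r) (m : ℕ) :
    (γ ^ m) r = algebraMap K L (ζ ^ m) * r := by
  induction m with
  | zero => simp
  | succ m ih =>
    rw [pow_succ', AlgEquiv.mul_apply, ih, map_mul, AlgEquiv.commutes, hγ, pow_succ', map_mul]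
    ring

theorem AlgEquiv.injective_fin_pow {γ : L ≃ₐ[K] L} (hζ : IsPrimitiveRoot ζ n) (hr : r ≠ 0)
    (hγ : γ r = algebraMap K L ζ * r) : Function.Injective fun j : Fin n => γ ^ (j : ℕ) := by
  intro i j hij
  have := congr($hij r)
  simp only [AlgEquiv.pow_apply_eq_algebraMap_pow_mul hγ, mul_left_inj' hr] at this
  exact Fin.ext (hζ.pow_inj i.isLt j.isLt ((algebraMap K L).injective this))

theorem algebraMap_norm_eq_prod_range_pow [FiniteDimensional K L] [IsGalois K L]
    {γ : L ≃ₐ[K] L} (hγ : Function.Injective fun j : Fin n => γ ^ (j : ℕ))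
    (hn : finrank K L = n) (x : L) :
    algebraMap K L (Algebra.norm K x) = ∏ t ∈ Finset.range n, (γ ^ t) x := by
  have hbij : Function.Bijective fun j : Fin n => γ ^ (j : ℕ) := by
    rw [Fintype.bijective_iff_injective_and_card, Fintype.card_fin, ← Nat.card_eq_fintype_card,
      IsGalois.card_aut_eq_finrank, hn]
    exact ⟨hγ, rfl⟩
  rw [Algebra.norm_eq_prod_automorphisms, ← Fin.prod_univ_eq_prod_range]
  exact (Fintype.prod_bijective _ hbij _ _ fun _ => rfl).symm

end Kummer

theorem stmt_5_general (p : ℕ) (hp : p.Prime) (K L : Type*) [Field K] [Field L] [Algebra K L]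
    (ζ : K) (hζ : IsPrimitiveRoot ζ p)
    (b : K) (hb : ¬ ∃ c : K, c ^ p = b)
    (r : L) (hr : r ^ p = algebraMap K L b)
    (hgen : Algebra.adjoin K {r} = ⊤)
    (γ : L ≃ₐ[K] L) (hγ : γ r = algebraMap K L ζ * r)
    (A : Type*) [Ring A] [Algebra K A]
    (f : L →ₐ[K] A) (v : A)
    (hv : v ^ p = algebraMap K A b)
    (hrel : ∀ x : L, v * f x = f (γ x) * v)
    (hgenA : Algebra.adjoin K (Set.range ⇑f ∪ {v}) = ⊤)
    (hdimA : Module.finrank K A = p ^ 2)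
    (hnorm : ∃ ξ : L, Algebra.norm K ξ = b) :
    Nonempty (A ≃ₐ[K] Matrix (Fin p) (Fin p) K) := by
  have : NeZero p := ⟨hp.ne_zero⟩
  obtain ⟨ξ, hξ⟩ := hnorm
  have hb0 : b ≠ 0 := fun h => hb ⟨0, by rw [h, zero_pow hp.ne_zero]⟩
  have hr0 : r ≠ 0 := by
    rintro rfl
    exact hb0 (by simpa [hp.ne_zero] using hr.symm)
  have hirr := X_pow_sub_C_irreducible_of_prime hp fun c hc => hb ⟨c, hc⟩
  have hζK : (primitiveRoots p K).Nonempty := ⟨ζ, (mem_primitiveRoots hp.pos).2 hζ⟩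
  have := isSplittingField_X_pow_sub_C_of_adjoin_eq_top hζ hr hgen
  have := IsSplittingField.finiteDimensional L (X ^ p - C b)
  have := isGalois_of_isSplittingField_X_pow_sub_C hζK hirr L
  have hdimL := finrank_of_isSplittingField_X_pow_sub_C hζK hirr L
  have hξ0 : ξ ≠ 0 := by
    rintro rfl
    exact hb0 (by simpa using hξ.symm)
  have hγinj := AlgEquiv.injective_fin_pow hζ hr0 hγ
  have hγp : γ ^ p = 1 := hdimL ▸ IsGalois.card_aut_eq_finrank K L ▸ pow_card_eq_one'
  have hA := cyclicSum_bijective_of_surjective (cyclicSum_surjective hrel hv hgenA)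
    (by rw [hdimA, hdimL, sq])
  have hE := cyclicSum_lmul_bijective hξ0 hγinj hdimL
  obtain ⟨e⟩ := nonempty_algEquiv_of_bijective_cyclicSum hrel hv lmul_mul_toLinearMap_mul_lmul
    (lmul_mul_toLinearMap_pow_eq_algebraMap hγp
      ((algebraMap_norm_eq_prod_range_pow hγinj hdimL ξ).symm.trans (congrArg _ hξ))) hA hE
  exact ⟨e.trans (algEquivMatrix (finBasisOfFinrankEq K L hdimL))⟩

/-- If `b` is a norm from the Kummer extension `L = K(b^{1/p})` to `K`, then the
cyclic algebra `A(χ,b)` (presented by `L`, an element `v` with `v^p = b` and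
`v·x = γ(x)·v`) is isomorphic to the matrix algebra `Mat_p(K)`. -/
theorem stmt_5 (p : ℕ) (hp : p.Prime) (K L : Type*) [Field K] [Field L] [Algebra K L]
    [FiniteDimensional K L]
    (ζ : K) (hζ : IsPrimitiveRoot ζ p)
    (b : K) (hb0 : b ≠ 0) (hb : ¬ ∃ c : K, c ^ p = b)
    (r : L) (hr : r ^ p = algebraMap K L b)
    (hgen : Algebra.adjoin K {r} = ⊤)
    (γ : L ≃ₐ[K] L) (hγ : γ r = algebraMap K L ζ * r)
    (A : Type*) [Ring A] [Algebra K A]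
    (f : L →ₐ[K] A) (v : A)
    (hv : v ^ p = algebraMap K A b)
    (hrel : ∀ x : L, v * f x = f (γ x) * v)
    (hgenA : Algebra.adjoin K (Set.range ⇑f ∪ {v}) = ⊤)
    (hdimA : Module.finrank K A = p ^ 2)
    (hnorm : ∃ ξ : L, Algebra.norm K ξ = b) :
    Nonempty (A ≃ₐ[K] Matrix (Fin p) (Fin p) K) :=
  stmt_5_general p hp K L ζ hζ b hb r hr hgen γ hγ A f v hv hrel hgenA hdimA hnorm
end

section
/- Let L/K be a cyclic field extension of prime degree p with Galois group generated by γ, and let A = A(χ,b) be the cyclic algebra with v^p = b ∈ K×. If A is isomorphic to Mat_p(K), then b is a norm for L/K. -/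
/-!
Transport `A ≅ Mat_p(K)` to an action of `A` on `M = K^p`. Through `L → A`, `M` becomes an
`L`-vector space of `K`-dimension `p = [L : K]`, so `x ↦ x • e` is bijective for any `e ≠ 0` and
`v e = c e` for some `c ∈ L`. The twisted commutation `v x = γ(x) v` then gives
`v^k e = (c · γ(c) ⋯ γ^{k-1}(c)) e`, and for `k = p` the left side is `b e` while the product is
`N_{L/K}(c)`, because `γ` generates `Gal(L/K)`.
-/

open Module Finset

theorem algebraMap_norm_eq_prod_range_pow_s6 {K L : Type*} [Field K] [Field L] [Algebra K L]
    [FiniteDimensional K L] [IsGalois K L] (γ : L ≃ₐ[K] L) (hγ : orderOf γ = finrank K L)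
    (c : L) : algebraMap K L (Algebra.norm K c) = ∏ i ∈ range (finrank K L), (γ ^ i) c := by
  have hbij : Function.Bijective (fun i : Fin (finrank K L) => γ ^ (i : ℕ)) := by
    rw [Fintype.bijective_iff_injective_and_card, Fintype.card_fin, ← Nat.card_eq_fintype_card,
      IsGalois.card_aut_eq_finrank]
    refine ⟨fun i j hij => Fin.ext ?_, rfl⟩
    exact pow_injOn_Iio_orderOf (by simp [hγ]) (by simp [hγ]) hij
  rw [Algebra.norm_eq_prod_automorphisms, prod_range]
  exact (Fintype.prod_bijective _ hbij _ _ fun _ => rfl).symm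

theorem Module.End.pow_apply_eq_algHom_prod_range {K L M : Type*} [CommSemiring K]
    [CommSemiring L] [Algebra K L] [AddCommMonoid M] [Module K M] (γ : L ≃ₐ[K] L)
    (φ : L →ₐ[K] Module.End K M) (w : Module.End K M) (hw : ∀ x, w * φ x = φ (γ x) * w)
    {c : L} {e : M} (hc : w e = φ c e) (k : ℕ) : (w ^ k) e = φ (∏ i ∈ range k, (γ ^ i) c) e := by
  induction k with
  | zero => simp
  | succ k ih =>
    rw [pow_succ', Module.End.mul_apply, ih, ← Module.End.mul_apply, hw, Module.End.mul_apply, hc,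
      ← Module.End.mul_apply, ← map_mul, prod_range_succ', map_prod]
    simp only [pow_succ', pow_zero, AlgEquiv.mul_apply, AlgEquiv.one_apply]

theorem AlgHom.surjective_apply_of_finrank_eq {K L M : Type*} [Field K] [Field L] [Algebra K L]
    [FiniteDimensional K L] [AddCommGroup M] [Module K M] (hM : finrank K M = finrank K L)
    (φ : L →ₐ[K] Module.End K M) {e : M} (he : e ≠ 0) : Function.Surjective fun x => φ x e := by
  have : FiniteDimensional K M := Module.finite_of_finrank_pos (hM ▸ finrank_pos)
  let T : L →ₗ[K] M := LinearMap.applyₗ e ∘ₗ φ.toLinearMap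
  have hT : Function.Injective T := by
    refine (injective_iff_map_eq_zero T).2 fun x hx => by_contra fun hx0 => he ?_
    calc e = φ x⁻¹ (φ x e) := by
          rw [← Module.End.mul_apply, ← map_mul, inv_mul_cancel₀ hx0, map_one, Module.End.one_apply]
      _ = 0 := (congrArg (φ x⁻¹) hx).trans (map_zero _)
  exact (LinearMap.injective_iff_surjective_of_finrank_eq_finrank hM.symm).1 hT

theorem exists_norm_eq_of_algHom_end {K L M : Type*} [Field K] [Field L] [Algebra K L]
    [FiniteDimensional K L] [IsGalois K L] [AddCommGroup M] [Module K M]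
    (hM : finrank K M = finrank K L) (γ : L ≃ₐ[K] L) (hγ : orderOf γ = finrank K L)
    (φ : L →ₐ[K] Module.End K M) (w : Module.End K M) (hw : ∀ x, w * φ x = φ (γ x) * w)
    (b : K) (hwb : w ^ finrank K L = algebraMap K (Module.End K M) b) :
    ∃ c : L, Algebra.norm K c = b := by
  have : Nontrivial M := Module.nontrivial_of_finrank_pos (R := K) (by rw [hM]; exact finrank_pos)
  obtain ⟨e, he⟩ := exists_ne (0 : M)
  obtain ⟨c, hc⟩ := AlgHom.surjective_apply_of_finrank_eq hM φ he (w e)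
  refine ⟨c, smul_left_injective K he ?_⟩
  have := Module.End.pow_apply_eq_algHom_prod_range γ φ w hw hc.symm (finrank K L)
  rw [hwb, ← algebraMap_norm_eq_prod_range_pow_s6 γ hγ, AlgHom.commutes] at this
  simpa using this.symm

theorem stmt_6_general (p : ℕ) (K L : Type*) [Field K] [Field L] [Algebra K L]
    [FiniteDimensional K L] [IsGalois K L]
    (hdeg : Module.finrank K L = p)
    (γ : L ≃ₐ[K] L) (hγ : orderOf γ = p)
    (b : K)
    (A : Type*) [Ring A] [Algebra K A]
    (f : L →ₐ[K] A) (v : A)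
    (hv : v ^ p = algebraMap K A b)
    (hrel : ∀ x : L, v * f x = f (γ x) * v)
    (hiso : Nonempty (A ≃ₐ[K] Matrix (Fin p) (Fin p) K)) :
    ∃ ξ : L, Algebra.norm K ξ = b := by
  obtain ⟨g⟩ := hiso
  subst hdeg
  let ψ : A →ₐ[K] Module.End K (Fin (finrank K L) → K) :=
    (Matrix.toLinAlgEquiv' : Matrix _ _ K ≃ₐ[K] _).toAlgHom.comp g.toAlgHom
  refine exists_norm_eq_of_algHom_end (M := Fin (finrank K L) → K) (by simp) γ hγ (ψ.comp f) (ψ v)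
    (fun x => ?_) b ?_
  · simpa only [map_mul, AlgHom.comp_apply] using congrArg ψ (hrel x)
  · rw [← map_pow, hv, AlgHom.commutes]

/-- If the cyclic algebra `A(χ,b)` attached to a cyclic extension `L/K` of prime
degree `p` with Galois group generated by `γ` is isomorphic to `Mat_p(K)`, then
`b` is a norm for `L/K`. -/
theorem stmt_6 (p : ℕ) (hp : p.Prime) (K L : Type*) [Field K] [Field L] [Algebra K L]
    [FiniteDimensional K L] [IsGalois K L]
    (hdeg : Module.finrank K L = p)
    (γ : L ≃ₐ[K] L) (hγ : orderOf γ = p)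
    (b : K) (hb0 : b ≠ 0)
    (A : Type*) [Ring A] [Algebra K A]
    (f : L →ₐ[K] A) (v : A)
    (hv : v ^ p = algebraMap K A b)
    (hrel : ∀ x : L, v * f x = f (γ x) * v)
    (hgenA : Algebra.adjoin K (Set.range ⇑f ∪ {v}) = ⊤)
    (hdimA : Module.finrank K A = p ^ 2)
    (hiso : Nonempty (A ≃ₐ[K] Matrix (Fin p) (Fin p) K)) :
    ∃ ξ : L, Algebra.norm K ξ = b :=
  stmt_6_general p K L hdeg γ hγ b A f v hv hrel hiso
end

section
/- Let K be a field containing a primitive p-th root of unity ζ_p, and let a, b ∈ K× be non-p-th powers. Let A be the K-algebra generated by x, y with relations x^p = a, y^p = b, xy = ζ_p·yx (the symbol algebra). Then a is a norm for K(b^{1/p})/K if and only if b is a norm for K(a^{1/p})/K. -/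
/-!
Suppose `a = N(ξ)` with `ξ ∈ K(√[p]b)`, and let `σ` be the automorphism `√[p]b ↦ ζ √[p]b`.
On the `p`-dimensional `K`-space `V = K(√[p]b)` the operators `X = ξ σ` and `Y = √[p]b ·`
satisfy `X ^ p = N(ξ) = a`, `Y ^ p = b` and `X Y = ζ Y X`. Through `√[p]a ↦ X`, `V` becomes a
one-dimensional vector space over `K(√[p]a)` on which `Y` is semilinear for the automorphism
`τ : √[p]a ↦ ζ⁻¹ √[p]a`. Writing `Y v = m v` for some `v ≠ 0`, we get
`b v = Y ^ p v = m τ(m) ⋯ τ^(p-1)(m) v = N(m) v`, so `b = N(m)`. The converse is symmetric.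
-/

open Polynomial Module Finset

theorem algebraMap_norm_eq_prod_pow_of_orderOf_eq_finrank {K L : Type*} [Field K] [Field L]
    [Algebra K L] [FiniteDimensional K L] {σ : L ≃ₐ[K] L} (hσ : orderOf σ = finrank K L) (x : L) :
    algebraMap K L (Algebra.norm K x) = ∏ i ∈ range (finrank K L), (σ ^ i) x := by
  classical
  have hcard : Nat.card (L ≃ₐ[K] L) = finrank K L :=
    le_antisymm ((Nat.card_congr (Algebra.IsAlgebraic.algEquivEquivAlgHom K L).toEquiv).trans_le
      (card_algHom_le_finrank K L L)) (hσ ▸ orderOf_le_card)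
  have := IsGalois.of_card_aut_eq_finrank K L hcard
  have hinj : Set.InjOn (σ ^ ·) (range (finrank K L)) := by
    rw [← hσ, coe_range]; exact pow_injOn_Iio_orderOf
  have himage : (range (finrank K L)).image (σ ^ ·) = univ := by
    refine eq_univ_of_card _ ?_
    rw [card_image_of_injOn hinj, card_range, ← hcard, Nat.card_eq_fintype_card]
  rw [Algebra.norm_eq_prod_automorphisms, ← himage, prod_image hinj]

section Kummer

variable {K L : Type*} [Field K] [Field L] [Algebra K L] {p : ℕ} {b : K} {r : L}

theorem minpoly_eq_X_pow_sub_C_of_pow_eq (hp : p.Prime) (hb : ¬∃ c : K, c ^ p = b)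
    (hr : r ^ p = algebraMap K L b) : minpoly K r = X ^ p - C b :=
  (minpoly.eq_of_irreducible_of_monic (X_pow_sub_C_irreducible_of_prime hp (by simpa using hb))
    (by rw [map_sub, aeval_X_pow, aeval_C, hr, sub_self]) (monic_X_pow_sub_C b hp.ne_zero)).symm

theorem orderOf_algEquiv_eq_orderOf (hr0 : r ≠ 0) (hgen : Algebra.adjoin K {r} = ⊤) {ζ : K}
    {σ : L ≃ₐ[K] L} (hσ : σ r = algebraMap K L ζ * r) : orderOf σ = orderOf ζ := by
  have hpow (n : ℕ) : (σ ^ n) r = algebraMap K L (ζ ^ n) * r := by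
    induction n with
    | zero => simp
    | succ n ih => rw [pow_succ, AlgEquiv.mul_apply, hσ, map_mul, AlgEquiv.commutes, ih,
        pow_succ, map_mul]; ring
  refine orderOf_eq_orderOf_iff.mpr fun n => ?_
  rw [← (mul_left_inj' hr0).trans (map_eq_one_iff _ (algebraMap K L).injective), one_mul, ← hpow]
  refine ⟨fun h => by rw [h]; rfl, fun h => ?_⟩
  exact AlgEquiv.coe_toAlgHom_injective (AlgHom.ext_of_adjoin_eq_top hgen
    (fun x hx => by rw [Set.mem_singleton_iff.mp hx]; exact h))

variable [FiniteDimensional K L]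

theorem finrank_eq_of_pow_eq (hp : p.Prime) (hb : ¬∃ c : K, c ^ p = b)
    (hr : r ^ p = algebraMap K L b) (hgen : Algebra.adjoin K {r} = ⊤) : finrank K L = p := by
  rw [(PowerBasis.ofAdjoinEqTop (IsIntegral.of_finite K r) hgen).finrank,
    PowerBasis.ofAdjoinEqTop_dim, minpoly_eq_X_pow_sub_C_of_pow_eq hp hb hr, natDegree_X_pow_sub_C]

theorem exists_algHom_apply_eq_of_pow_eq (hp : p.Prime) (hb : ¬∃ c : K, c ^ p = b)
    (hr : r ^ p = algebraMap K L b) (hgen : Algebra.adjoin K {r} = ⊤) {B : Type*} [Ring B]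
    [Algebra K B] {x : B} (hx : x ^ p = algebraMap K B b) : ∃ φ : L →ₐ[K] B, φ r = x := by
  let pb := PowerBasis.ofAdjoinEqTop (IsIntegral.of_finite K r) hgen
  have hroot : aeval x (minpoly K pb.gen) = 0 := by
    rw [PowerBasis.ofAdjoinEqTop_gen, minpoly_eq_X_pow_sub_C_of_pow_eq hp hb hr, map_sub,
      aeval_X_pow, aeval_C, hx, sub_self]
  exact ⟨pb.lift x hroot, by simpa [pb] using pb.lift_gen x hroot⟩

theorem exists_algEquiv_apply_eq_mul (hp : p.Prime) (hb : ¬∃ c : K, c ^ p = b)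
    (hr : r ^ p = algebraMap K L b) (hgen : Algebra.adjoin K {r} = ⊤) {ζ : K} (hζ : ζ ^ p = 1) :
    ∃ σ : L ≃ₐ[K] L, σ r = algebraMap K L ζ * r := by
  obtain ⟨φ, hφ⟩ := exists_algHom_apply_eq_of_pow_eq hp hb hr hgen
    (x := algebraMap K L ζ * r) (by rw [mul_pow, ← map_pow, hζ, map_one, one_mul, hr])
  exact ⟨(Algebra.IsAlgebraic.algEquivEquivAlgHom K L).symm φ, hφ⟩

theorem orderOf_eq_finrank_of_apply_eq_mul (hp : p.Prime) (hb : ¬∃ c : K, c ^ p = b)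
    (hr : r ^ p = algebraMap K L b) (hgen : Algebra.adjoin K {r} = ⊤) {ζ : K}
    (hζ : IsPrimitiveRoot ζ p) {σ : L ≃ₐ[K] L} (hσ : σ r = algebraMap K L ζ * r) :
    orderOf σ = finrank K L := by
  have hr0 : r ≠ 0 := by
    rintro rfl
    exact hb ⟨0, (algebraMap K L).injective (by rw [map_pow, map_zero, hr])⟩
  rw [orderOf_algEquiv_eq_orderOf hr0 hgen hσ, ← hζ.eq_orderOf, finrank_eq_of_pow_eq hp hb hr hgen]

end Kummer

section Semilinear

theorem AlgEquiv.prod_range_succ_pow_apply {K L : Type*} [CommSemiring K] [CommSemiring L]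
    [Algebra K L] (τ : L ≃ₐ[K] L) (m : L) (k : ℕ) :
    ∏ i ∈ range (k + 1), (τ ^ i) m = τ (∏ i ∈ range k, (τ ^ i) m) * m := by
  rw [prod_range_succ', map_prod]
  simp only [pow_succ', AlgEquiv.mul_apply, pow_zero, AlgEquiv.one_apply]

variable {K L B : Type*} [CommSemiring K] [CommSemiring L] [Algebra K L] [Semiring B]
  [Algebra K B]

theorem mul_map_eq_map_mul_of_adjoin_eq_top (f g : L →ₐ[K] B) {y : B} {r : L}
    (hgen : Algebra.adjoin K {r} = ⊤) (hr : y * f r = g r * y) (c : L) : y * f c = g c * y := by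
  have hc : c ∈ Algebra.adjoin K {r} := hgen ▸ Algebra.mem_top
  induction hc using Algebra.adjoin_induction with
  | mem x hx => rwa [Set.mem_singleton_iff.mp hx]
  | algebraMap k => rw [AlgHom.commutes, AlgHom.commutes, Algebra.commutes]
  | add x z _ _ hx hz => rw [map_add, map_add, mul_add, add_mul, hx, hz]
  | mul x z _ _ hx hz => rw [map_mul, map_mul, ← mul_assoc, hx, mul_assoc, hz, mul_assoc]

theorem map_mul_pow_of_mul_map_eq (f : L →ₐ[K] B) (τ : L ≃ₐ[K] L) {y : B}
    (hy : ∀ c, y * f c = f (τ c) * y) (m : L) (k : ℕ) :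
    (f m * y) ^ k = f (∏ i ∈ range k, (τ ^ i) m) * y ^ k := by
  induction k with
  | zero => simp
  | succ k ih =>
    rw [pow_succ', ih, τ.prod_range_succ_pow_apply, mul_comm, map_mul, mul_assoc, ← mul_assoc y,
      hy, pow_succ', mul_assoc, mul_assoc]

variable {V : Type*} [AddCommMonoid V] [Module K V]

theorem pow_apply_eq_map_prod_apply (φ : L →ₐ[K] End K V) (τ : L ≃ₐ[K] L) {Y : End K V}
    (hY : ∀ c, Y * φ c = φ (τ c) * Y) {v : V} {m : L} (hm : Y v = φ m v) (k : ℕ) :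
    (Y ^ k) v = φ (∏ i ∈ range k, (τ ^ i) m) v := by
  induction k with
  | zero => simp
  | succ k ih =>
    rw [pow_succ', Module.End.mul_apply, ih, ← Module.End.mul_apply, hY, Module.End.mul_apply, hm,
      τ.prod_range_succ_pow_apply, map_mul, Module.End.mul_apply]

end Semilinear

theorem exists_prod_pow_eq_algebraMap_of_pow_eq {K L V : Type*} [Field K] [Field L]
    [Algebra K L] [FiniteDimensional K L] [AddCommGroup V] [Module K V] [FiniteDimensional K V]
    (φ : L →ₐ[K] End K V) (τ : L ≃ₐ[K] L) {Y : End K V} (hY : ∀ c, Y * φ c = φ (τ c) * Y)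
    (hdim : finrank K L = finrank K V) {n : ℕ} {b : K}
    (hYn : Y ^ n = algebraMap K (End K V) b) :
    ∃ m : L, ∏ i ∈ range n, (τ ^ i) m = algebraMap K L b := by
  have : Nontrivial V := Module.nontrivial_of_finrank_pos (hdim ▸ finrank_pos)
  obtain ⟨v, hv⟩ := exists_ne (0 : V)
  let ψ : L →ₗ[K] V := LinearMap.applyₗ v ∘ₗ φ.toLinearMap
  have hψ : Function.Injective ψ := by
    refine (injective_iff_map_eq_zero ψ).mpr fun c hc => by_contra fun h => hv ?_
    calc v = φ (c⁻¹ * c) v := by rw [inv_mul_cancel₀ h, map_one, Module.End.one_apply]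
      _ = φ c⁻¹ (ψ c) := by rw [map_mul, Module.End.mul_apply]; rfl
      _ = 0 := by rw [hc, map_zero]
  obtain ⟨m, hm⟩ := (LinearMap.injective_iff_surjective_of_finrank_eq_finrank hdim).mp hψ (Y v)
  refine ⟨m, hψ ?_⟩
  change φ _ v = φ _ v
  rw [← pow_apply_eq_map_prod_apply φ τ hY hm.symm, hYn, AlgHom.commutes]

theorem lmul_mul_toLinearMap_pow_finrank {K L : Type*} [Field K] [Field L] [Algebra K L]
    [FiniteDimensional K L] {σ : L ≃ₐ[K] L} (hσ : orderOf σ = finrank K L) (ξ : L) :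
    (Algebra.lmul K L ξ * σ.toLinearMap) ^ finrank K L =
      algebraMap K (End K L) (Algebra.norm K ξ) := by
  have hσ_lmul (c : L) : σ.toLinearMap * Algebra.lmul K L c =
      Algebra.lmul K L (σ c) * σ.toLinearMap := by
    ext; simp
  rw [map_mul_pow_of_mul_map_eq _ σ hσ_lmul, ← AlgEquiv.pow_toLinearMap,
    ← algebraMap_norm_eq_prod_pow_of_orderOf_eq_finrank hσ, ← hσ, pow_orderOf_eq_one,
    AlgHom.commutes]
  rfl

theorem exists_norm_eq_of_exists_norm_eq {p : ℕ} (hp : p.Prime) {K : Type*} [Field K] {ζ : K}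
    (hζ : IsPrimitiveRoot ζ p) {a b : K} (ha : ¬∃ c : K, c ^ p = a) (hb : ¬∃ c : K, c ^ p = b)
    {La Lb : Type*} [Field La] [Algebra K La] [FiniteDimensional K La]
    [Field Lb] [Algebra K Lb] [FiniteDimensional K Lb]
    {ra : La} (hra : ra ^ p = algebraMap K La a) (hgena : Algebra.adjoin K {ra} = ⊤)
    {rb : Lb} (hrb : rb ^ p = algebraMap K Lb b) (hgenb : Algebra.adjoin K {rb} = ⊤)
    (h : ∃ ξ : Lb, Algebra.norm K ξ = a) : ∃ η : La, Algebra.norm K η = b := by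
  obtain ⟨ξ, hξ⟩ := h
  have hfa := finrank_eq_of_pow_eq hp ha hra hgena
  have hfb := finrank_eq_of_pow_eq hp hb hrb hgenb
  obtain ⟨σ, hσ⟩ := exists_algEquiv_apply_eq_mul hp hb hrb hgenb hζ.pow_eq_one
  obtain ⟨τ, hτ⟩ := exists_algEquiv_apply_eq_mul hp ha hra hgena hζ.inv.pow_eq_one
  let X : End K Lb := Algebra.lmul K Lb ξ * σ.toLinearMap
  have hXp : X ^ p = algebraMap K (End K Lb) a := by
    have := lmul_mul_toLinearMap_pow_finrank
      (orderOf_eq_finrank_of_apply_eq_mul hp hb hrb hgenb hζ hσ) ξ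
    rwa [hfb, hξ] at this
  obtain ⟨φ, hφ⟩ := exists_algHom_apply_eq_of_pow_eq hp ha hra hgena hXp
  let Y : End K Lb := Algebra.lmul K Lb rb
  have hY (c : La) : Y * φ c = φ (τ c) * Y := by
    refine mul_map_eq_map_mul_of_adjoin_eq_top φ (φ.comp τ.toAlgHom) hgena ?_ c
    have hζ0 : algebraMap K Lb ζ ≠ 0 := (_root_.map_ne_zero _).mpr (hζ.ne_zero hp.ne_zero)
    change Y * φ ra = φ (τ ra) * Y
    rw [hτ, map_mul, AlgHom.commutes, hφ]
    ext v
    simp only [Algebra.coe_lmul_eq_mul, Module.End.mul_apply, LinearMap.mul_apply_apply,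
      AlgEquiv.toLinearMap_apply, map_mul, hσ, Module.algebraMap_end_apply, Algebra.smul_def,
      map_inv₀, Y, X]
    field_simp
  have hYp : Y ^ p = algebraMap K (End K Lb) b := by
    rw [← map_pow, hrb, AlgHom.commutes]
  obtain ⟨m, hm⟩ := exists_prod_pow_eq_algebraMap_of_pow_eq φ τ hY (hfa.trans hfb.symm) hYp
  refine ⟨m, (algebraMap K La).injective ?_⟩
  rw [algebraMap_norm_eq_prod_pow_of_orderOf_eq_finrank
    (orderOf_eq_finrank_of_apply_eq_mul hp ha hra hgena hζ.inv hτ), hfa, hm]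

theorem stmt_7_general (p : ℕ) (hp : p.Prime) (K : Type*) [Field K]
    (ζ : K) (hζ : IsPrimitiveRoot ζ p)
    (a b : K)
    (ha : ¬ ∃ c : K, c ^ p = a) (hb : ¬ ∃ c : K, c ^ p = b)
    (La Lb : Type*) [Field La] [Algebra K La] [FiniteDimensional K La]
    [Field Lb] [Algebra K Lb] [FiniteDimensional K Lb]
    (ra : La) (hra : ra ^ p = algebraMap K La a)
    (hgena : Algebra.adjoin K {ra} = ⊤)
    (rb : Lb) (hrb : rb ^ p = algebraMap K Lb b)
    (hgenb : Algebra.adjoin K {rb} = ⊤) :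
    (∃ ξ : Lb, Algebra.norm K ξ = a) ↔ (∃ ξ : La, Algebra.norm K ξ = b) :=
  ⟨exists_norm_eq_of_exists_norm_eq hp hζ ha hb hra hgena hrb hgenb,
    exists_norm_eq_of_exists_norm_eq hp hζ hb ha hrb hgenb hra hgena⟩

/-- For `K` containing a primitive `p`-th root of unity and `a, b ∈ K×` non-`p`-th
powers: `a` is a norm for `K(b^{1/p})/K` iff `b` is a norm for `K(a^{1/p})/K`
(both conditions being equivalent to the symbol algebra `(a,b)_{ζ_p}` being split). -/
theorem stmt_7 (p : ℕ) (hp : p.Prime) (K : Type*) [Field K]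
    (ζ : K) (hζ : IsPrimitiveRoot ζ p)
    (a b : K) (ha0 : a ≠ 0) (hb0 : b ≠ 0)
    (ha : ¬ ∃ c : K, c ^ p = a) (hb : ¬ ∃ c : K, c ^ p = b)
    (La Lb : Type*) [Field La] [Algebra K La] [FiniteDimensional K La]
    [Field Lb] [Algebra K Lb] [FiniteDimensional K Lb]
    (ra : La) (hra : ra ^ p = algebraMap K La a)
    (hgena : Algebra.adjoin K {ra} = ⊤)
    (rb : Lb) (hrb : rb ^ p = algebraMap K Lb b)
    (hgenb : Algebra.adjoin K {rb} = ⊤) :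
    (∃ ξ : Lb, Algebra.norm K ξ = a) ↔ (∃ ξ : La, Algebra.norm K ξ = b) :=
  stmt_7_general p hp K ζ hζ a b ha hb La Lb ra hra hgena rb hrb hgenb
end

section
/- With inputs positive integers a ≤ b ≤ B, Algorithm 3.6 (the Legendre-type algorithm for cubic norm equations) terminates after O((log B)²) iterations. Specifically: in the 'reduction' step b_new < (3/4)·b with a unchanged; whenever the 'swap' step b₂·F(u,v) ≥ (3/4)·b occurs one has b < 1.93·a, a_new = b − a < 0.93·a, and b_new = a²b < 2a³; consequently the total number of iterations is O((log B)²). -/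
/-!
Squaring the swap condition twice gives `(81/256) b² ≤ (27/23) a²`, and `256·27/(81·23) < 1.93²`.
For the iteration count, `a` never increases, so `a ≤ B` throughout. With `q = log (4/3)`,
`r = log (100/93)` and `M = (2 log B + q) / r`, the potential `M log a + log b` drops by at least `q`
in every step: a reduction lowers `log b` by `q`, a swap lowers `log a` by `r` and raises `log b` by
at most `2 log B`. The potential starts below `(M + 1) log B` and stays nonnegative.
-/

open Real

lemma lt_of_swap_condition {a b : ℝ} (ha : 0 ≤ a) (hb : 0 < b)
    (h : (3 / 4) * b ≤ (27 / 23 : ℝ) ^ ((1 : ℝ) / 4) * (a * b) ^ ((1 : ℝ) / 2)) :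
    b < 1.93 * a := by
  have hc : ((27 / 23 : ℝ) ^ ((1 : ℝ) / 4)) ^ 4 = 27 / 23 := by
    rw [← rpow_natCast, ← rpow_mul (by norm_num)]
    norm_num
  have hs : ((a * b) ^ ((1 : ℝ) / 2)) ^ 4 = (a * b) ^ 2 := by
    rw [← rpow_natCast, ← rpow_mul (by positivity)]
    norm_num
  have h4 : ((3 / 4) * b) ^ 4 ≤ 27 / 23 * (a * b) ^ 2 := by
    calc ((3 / 4) * b) ^ 4
        ≤ ((27 / 23 : ℝ) ^ ((1 : ℝ) / 4) * (a * b) ^ ((1 : ℝ) / 2)) ^ 4 := by gcongr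
      _ = 27 / 23 * (a * b) ^ 2 := by rw [mul_pow, hc, hs]
  have h2 : b ^ 2 < (1.93 * a) ^ 2 := by nlinarith [pow_pos hb 2]
  exact lt_of_pow_lt_pow_left₀ 2 (by positivity) h2

lemma swap_bounds {a b : ℝ} (ha : 0 ≤ a) (hb : 0 < b)
    (h : (3 / 4) * b ≤ (27 / 23 : ℝ) ^ ((1 : ℝ) / 4) * (a * b) ^ ((1 : ℝ) / 2)) :
    b < 1.93 * a ∧ b - a < 0.93 * a ∧ a ^ 2 * b < 2 * a ^ 3 := by
  have hba := lt_of_swap_condition ha hb h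
  have ha : 0 < a := by linarith
  refine ⟨hba, by linarith, ?_⟩
  nlinarith [pow_pos ha 2]

lemma add_nat_mul_le_of_forall_add_le {Φ : ℕ → ℝ} {q : ℝ} {N : ℕ}
    (h : ∀ n < N, Φ (n + 1) + q ≤ Φ n) : ∀ n ≤ N, Φ n + n * q ≤ Φ 0 := by
  intro n hn
  induction n with
  | zero => simp
  | succ n ih =>
    have := h n hn
    have := ih (by omega)
    push_cast
    linarith

lemma Real.log_le_sub_log_inv_of_le_mul {x y c : ℝ} (hx : 0 < x) (hc : 0 < c) (h : x ≤ c * y) :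
    log x ≤ log y - log c⁻¹ := by
  have hy : 0 < y := pos_of_mul_pos_right (hx.trans_le h) hc.le
  rw [log_inv, sub_neg_eq_add, ← log_mul hy.ne' hc.ne', mul_comm]
  exact log_le_log hx h

section Run

variable {a b : ℕ → ℝ} {N : ℕ} {B ρ σ : ℝ}

lemma a_le_of_run (hσ : σ ≤ 1) (ha : ∀ n ≤ N, 0 ≤ a n) (ha0 : a 0 ≤ B)
    (hstep : ∀ n < N, (a (n + 1) = a n ∧ b (n + 1) ≤ ρ * b n) ∨
      (a (n + 1) ≤ σ * a n ∧ b (n + 1) ≤ a n ^ 2 * b n)) :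
    ∀ n ≤ N, a n ≤ B := by
  intro n hn
  induction n with
  | zero => exact ha0
  | succ n ih =>
    have hle : a (n + 1) ≤ a n := by
      rcases hstep n hn with ⟨h, -⟩ | ⟨h, -⟩
      · exact h.le
      · nlinarith [ha n (by omega)]
    exact hle.trans (ih (by omega))

theorem run_length_mul_log_le (hρ0 : 0 < ρ) (hρ1 : ρ < 1) (hσ0 : 0 < σ) (hσ1 : σ < 1)
    (hpos : ∀ n ≤ N, 1 ≤ a n ∧ 1 ≤ b n) (ha0 : a 0 ≤ B) (hb0 : b 0 ≤ B)
    (hstep : ∀ n < N, (a (n + 1) = a n ∧ b (n + 1) ≤ ρ * b n) ∨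
      (a (n + 1) ≤ σ * a n ∧ b (n + 1) ≤ a n ^ 2 * b n)) :
    N * log ρ⁻¹ ≤ ((2 * log B + log ρ⁻¹) / log σ⁻¹ + 1) * log B := by
  set q := log ρ⁻¹
  set r := log σ⁻¹
  have hq : 0 < q := log_pos (one_lt_inv_iff₀.2 ⟨hρ0, hρ1⟩)
  have hr : 0 < r := log_pos (one_lt_inv_iff₀.2 ⟨hσ0, hσ1⟩)
  have haB := a_le_of_run hσ1.le (fun n hn => zero_le_one.trans (hpos n hn).1) ha0 hstep
  set M := (2 * log B + q) / r
  have hM : 0 ≤ M := by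
    have := log_nonneg ((hpos 0 N.zero_le).1.trans ha0)
    positivity
  have hMr : M * r = 2 * log B + q := div_mul_cancel₀ _ hr.ne'
  set Φ : ℕ → ℝ := fun n => M * log (a n) + log (b n)
  have hdecr : ∀ n < N, Φ (n + 1) + q ≤ Φ n := by
    intro n hn
    obtain ⟨ha, hb⟩ := hpos n hn.le
    obtain ⟨ha', hb'⟩ := hpos (n + 1) hn
    rcases hstep n hn with ⟨hae, hble⟩ | ⟨hale, hble⟩
    · have := log_le_sub_log_inv_of_le_mul (by linarith) hρ0 hble
      simp only [Φ, hae]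
      linarith
    · have hla := log_le_sub_log_inv_of_le_mul (by linarith) hσ0 hale
      have hlb : log (b (n + 1)) ≤ 2 * log (a n) + log (b n) := by
        calc log (b (n + 1)) ≤ log (a n ^ 2 * b n) := log_le_log (by linarith) hble
          _ = 2 * log (a n) + log (b n) := by
            rw [log_mul (by positivity) (by positivity), log_pow, Nat.cast_ofNat]
      have hlaB : log (a n) ≤ log B := log_le_log (by linarith) (haB n hn.le)
      have := mul_le_mul_of_nonneg_left hla hM
      simp only [Φ]
      nlinarith
  have hΦN : 0 ≤ Φ N := by
    obtain ⟨ha, hb⟩ := hpos N le_rfl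
    have := log_nonneg ha
    have := log_nonneg hb
    positivity
  have hΦ0 : Φ 0 ≤ (M + 1) * log B := by
    obtain ⟨ha, hb⟩ := hpos 0 N.zero_le
    have := mul_le_mul_of_nonneg_left (log_le_log (by linarith) ha0) hM
    have := log_le_log (by linarith) hb0
    simp only [Φ]
    linarith
  linarith [add_nat_mul_le_of_forall_add_le hdecr N le_rfl]

end Run

/-- One iteration of Algorithm 3.6 on `(a, b)`: a reduction step or a swap step. -/
def AlgStep (p p' : ℕ × ℕ) : Prop :=
  (p'.1 = p.1 ∧ (p'.2 : ℝ) < (3 / 4) * p.2) ∨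
  ((3 / 4 : ℝ) * p.2 ≤ (27 / 23 : ℝ) ^ ((1 : ℝ) / 4) * ((p.1 * p.2 : ℕ) : ℝ) ^ ((1 : ℝ) / 2) ∧
    p'.1 + p.1 = p.2 ∧ p'.2 = p.1 ^ 2 * p.2)

lemma AlgStep.cast_le {p p' : ℕ × ℕ} (hb : 0 < p.2) (h : AlgStep p p') :
    ((p'.1 : ℝ) = p.1 ∧ (p'.2 : ℝ) ≤ 3 / 4 * p.2) ∨
      ((p'.1 : ℝ) ≤ 0.93 * p.1 ∧ (p'.2 : ℝ) ≤ (p.1 : ℝ) ^ 2 * p.2) := by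
  rcases h with ⟨ha', hb'⟩ | ⟨hswap, ha', hb'⟩
  · exact Or.inl ⟨congrArg _ ha', hb'.le⟩
  · push_cast at hswap
    have := (swap_bounds (Nat.cast_nonneg _) (by exact_mod_cast hb) hswap).2.1
    refine Or.inr ⟨?_, by rw [hb']; push_cast; rfl⟩
    have : (p'.1 : ℝ) + p.1 = p.2 := by exact_mod_cast ha'
    linarith

/-- Quantitative analysis of Algorithm 3.6 (Legendre-type algorithm for cubic norm
equations).  First part: if the "swap" condition `(3/4)b ≤ (27/23)^{1/4}(ab)^{1/2}`
holds then `b < 1.93a`, `a_new = b − a < 0.93a` and `b_new = a²b < 2a³`.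
Second part: any run of the algorithm — a sequence of pairs of positive integers
where each step is either a reduction step (`a` unchanged, `b_new < (3/4)b`) or a
swap step (requiring `(3/4)b ≤ (27/23)^{1/4}(ab)^{1/2}`, with `a_new = b − a`,
`b_new = a²b`) — starting from `a, b ≤ B` takes `O((log B)²)` iterations. -/
theorem stmt_13 :
    (∀ a b : ℝ, 1 ≤ a → 1 ≤ b →
      (3 / 4) * b ≤ (27 / 23 : ℝ) ^ ((1 : ℝ) / 4) * (a * b) ^ ((1 : ℝ) / 2) →
      b < 1.93 * a ∧ b - a < 0.93 * a ∧ a ^ 2 * b < 2 * a ^ 3) ∧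
    ∃ C : ℝ, 0 < C ∧ ∀ B : ℕ, 2 ≤ B → ∀ N : ℕ, ∀ s : ℕ → ℕ × ℕ,
      (s 0).1 ≤ B → (s 0).2 ≤ B →
      (∀ n, n ≤ N → 1 ≤ (s n).1 ∧ 1 ≤ (s n).2) →
      (∀ n, n < N →
        ((s (n + 1)).1 = (s n).1 ∧ ((s (n + 1)).2 : ℝ) < (3 / 4) * (s n).2) ∨
        ((3 / 4 : ℝ) * (s n).2 ≤
            (27 / 23 : ℝ) ^ ((1 : ℝ) / 4) * (((s n).1 * (s n).2 : ℕ) : ℝ) ^ ((1 : ℝ) / 2) ∧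
          (s (n + 1)).1 + (s n).1 = (s n).2 ∧
          (s (n + 1)).2 = (s n).1 ^ 2 * (s n).2)) →
      (N : ℝ) ≤ C * Real.log B ^ 2 := by
  refine ⟨fun a b ha hb h => swap_bounds (by linarith) (by linarith) h, ?_⟩
  set q := log (3 / 4 : ℝ)⁻¹
  set r := log (0.93 : ℝ)⁻¹
  have hq : 0 < q := log_pos (by norm_num)
  have hr : 0 < r := log_pos (by norm_num)
  refine ⟨(3 / r + 2) / q, by positivity, fun B hB N s h0a h0b hpos hstep => ?_⟩
  have hrun := run_length_mul_log_le (a := fun n => ((s n).1 : ℝ)) (b := fun n => ((s n).2 : ℝ))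
    (B := B) (by norm_num) (by norm_num) (by norm_num) (by norm_num)
    (fun n hn => by exact_mod_cast hpos n hn) (by exact_mod_cast h0a) (by exact_mod_cast h0b)
    (fun n hn => AlgStep.cast_le (hpos n hn.le).2 (hstep n hn))
  have hlog2 : log 2 ≤ log B := log_le_log two_pos (by exact_mod_cast hB)
  have hqB : q ≤ log B := (log_le_log (by norm_num) (by norm_num)).trans hlog2
  have hB1 : 1 ≤ 2 * log B := by linarith [log_two_gt_d9]
  rw [div_mul_eq_mul_div, le_div_iff₀ hq]
  calc N * q ≤ ((2 * log B + q) / r + 1) * log B := hrun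
    _ ≤ ((2 * log B + log B) / r + 2 * log B) * log B := by gcongr
    _ = (3 / r + 2) * log B ^ 2 := by ring
end

section
/- Let K be a field of characteristic 0, p an odd prime, and suppose Gal(K̄/K) acts on a basis S, T of (Z/pZ)² by σ(S)=S, σ(T)=S+T, τ(S)=S, τ(T)=gT (the Z/pZ-nonsplit case), where g is a primitive root mod p, with image generated by σ, τ. Let M be the fixed field of the kernel of this action and L₂ ⊂ M the fixed field of τ. If ξ ∈ L₂ satisfies N_{L₂/K}(ξ) = a ∈ K×, then b = ∏_{i=1}^{p−1} σⁱ(ξ)^{p−i} ∈ M satisfies: (1) τ(b)/b^g ∈ (M×)^p, (2) N_{M/L₁}(b) ∈ (L₁×)^p where L₁ = K(ζ_p), and (3) σ(b)/(ab) ∈ (M×)^p. -/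
/-!
Write `f i = σⁱ ξ`, so that `b = ∏_{0<i<p} f i ^ (p - i)`. Applying `σ` lowers every exponent
by one, and the discrepancy is `(σ ξ)^p` times the norm `∏_{i<p} f i = a`. The product of the
conjugates `σᵏ b` is `∏_i (σⁱ a)^(p-i) = a^(p(p-1)/2)`, a `p`-th power because `p` is odd.
Finally `τ σ^(gk) = σᵏ τ` shows that `τ` sends `f (g k mod p)` to `f k`; reindexing by
`k ↦ g k mod p`, the exponents of `τ b` and of `b^g` agree modulo `p`, and changing exponents of
nonzero factors by multiples of `p` only changes a product by a `p`-th power.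
-/

open Finset

theorem exists_pow_eq_pow_mul_pow {G₀ : Type*} [GroupWithZero G₀] {x : G₀} (hx : x ≠ 0)
    {p m n : ℕ} (h : m ≡ n [MOD p]) : ∃ w ≠ 0, x ^ m = x ^ n * w ^ p := by
  obtain ⟨t, ht⟩ := Nat.modEq_iff_dvd.1 h
  refine ⟨x ^ (-t), zpow_ne_zero _ hx, ?_⟩
  rw [← zpow_natCast, ← zpow_natCast, ← zpow_natCast (x ^ (-t)), ← zpow_mul,
    ← zpow_add₀ hx]
  congr 1
  linarith

theorem exists_prod_pow_eq_prod_pow_mul_pow {ι G₀ : Type*} [CommGroupWithZero G₀]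
    {s : Finset ι} {f : ι → G₀} (hf : ∀ i ∈ s, f i ≠ 0) {p : ℕ} {e e' : ι → ℕ}
    (h : ∀ i ∈ s, e i ≡ e' i [MOD p]) :
    ∃ w ≠ 0, ∏ i ∈ s, f i ^ e i = (∏ i ∈ s, f i ^ e' i) * w ^ p := by
  choose! w hw0 hw using fun i hi => exists_pow_eq_pow_mul_pow (hf i hi) (h i hi)
  exact ⟨∏ i ∈ s, w i, prod_ne_zero_iff.2 hw0, by
    rw [← prod_pow, ← prod_mul_distrib]; exact prod_congr rfl hw⟩

theorem Finset.prod_Ico_one_mul_mod {α : Type*} [CommMonoid α] {p g : ℕ} (hg : g.Coprime p)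
    (F : ℕ → α) : ∏ k ∈ Ico 1 p, F (g * k % p) = ∏ k ∈ Ico 1 p, F k := by
  have hmaps : ∀ k ∈ Ico 1 p, g * k % p ∈ Ico 1 p := by
    intro k hk
    rw [mem_Ico] at hk ⊢
    refine ⟨Nat.pos_of_ne_zero fun h0 => ?_, Nat.mod_lt _ (by omega)⟩
    have := Nat.le_of_dvd (by omega)
      (hg.symm.dvd_of_dvd_mul_left (Nat.dvd_of_mod_eq_zero h0))
    omega
  have hinj : Set.InjOn (fun k => g * k % p) (Ico 1 p : Set ℕ) := by
    intro i hi j hj hij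
    simp only [coe_Ico, Set.mem_Ico] at hi hj
    have := Nat.ModEq.cancel_left_of_coprime hg.symm hij
    rwa [Nat.ModEq, Nat.mod_eq_of_lt hi.2, Nat.mod_eq_of_lt hj.2] at this
  exact prod_nbij _ hmaps hinj (surjOn_of_injOn_of_card_le _ hmaps hinj le_rfl) fun _ _ => rfl

theorem Finset.pow_mul_prod_Ico_pow_succ {α : Type*} [CommMonoid α] (f : ℕ → α) (n : ℕ) :
    f 1 ^ n * ∏ i ∈ Ico 1 n, f (i + 1) ^ (n - i) =
      (∏ i ∈ Ico 1 (n + 1), f i) * ∏ i ∈ Ico 1 n, f i ^ (n - i) := by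
  rcases Nat.eq_zero_or_pos n with rfl | hn
  · simp
  calc f 1 ^ n * ∏ i ∈ Ico 1 n, f (i + 1) ^ (n - i)
      = ∏ i ∈ Ico 1 (n + 1), f i ^ (n + 1 - i) := by
        rw [prod_eq_prod_Ico_succ_bot (by omega) (fun i => f i ^ (n + 1 - i)),
          ← prod_Ico_add' (fun i => f i ^ (n + 1 - i)) 1 n 1]
        simp
    _ = ∏ i ∈ Ico 1 (n + 1), f i * f i ^ (n - i) := by
        refine prod_congr rfl fun i hi => ?_
        rw [← pow_succ', Nat.sub_add_comm (by simp at hi; omega)]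
    _ = _ := by
        rw [prod_mul_distrib, prod_Ico_succ_top hn (fun i => f i ^ (n - i))]
        simp

theorem Finset.sum_Ico_one_tsub_of_odd {p : ℕ} (hp : Odd p) :
    ∑ i ∈ Ico 1 p, (p - i) = p * (p / 2) := by
  have hreflect := sum_Ico_reflect (fun j => j) 1 (Nat.le_succ p)
  simp only [add_tsub_cancel_left, add_tsub_cancel_right] at hreflect
  rw [hreflect, ← zero_add (∑ x ∈ Ico 1 p, x), ← sum_range_eq_add_Ico (fun i => i) hp.pos,
    sum_range_id]
  obtain ⟨m, rfl⟩ := hp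
  rw [show 2 * m + 1 - 1 = 2 * m by omega, show (2 * m + 1) / 2 = m by omega, mul_left_comm,
    Nat.mul_div_cancel_left _ two_pos]

section WeightedOrbitProd

variable {K M : Type*} [Field K] [Field M] [Algebra K M]

def weightedOrbitProd (σ : M ≃ₐ[K] M) (p : ℕ) (ξ : M) : M :=
  ∏ i ∈ Ico 1 p, ((σ ^ i) ξ) ^ (p - i)

variable {σ : M ≃ₐ[K] M} {p : ℕ} {ξ : M} {a : K}

theorem prod_range_pow_apply_pow_apply_eq_algebraMap
    (hN : ∏ k ∈ range p, (σ ^ k) ξ = algebraMap K M a) (i : ℕ) :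
    ∏ k ∈ range p, (σ ^ k) ((σ ^ i) ξ) = algebraMap K M a := by
  calc ∏ k ∈ range p, (σ ^ k) ((σ ^ i) ξ) = (σ ^ i) (∏ k ∈ range p, (σ ^ k) ξ) := by
        rw [map_prod]
        refine prod_congr rfl fun k _ => ?_
        rw [← AlgEquiv.mul_apply, ← AlgEquiv.mul_apply, pow_mul_comm]
    _ = algebraMap K M a := by rw [hN, AlgEquiv.commutes]

theorem exists_apply_weightedOrbitProd_eq (hξ : ξ ≠ 0)
    (hN : ∏ k ∈ range p, (σ ^ k) ξ = algebraMap K M a) :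
    ∃ z ≠ 0, σ (weightedOrbitProd σ p ξ) =
      algebraMap K M a * weightedOrbitProd σ p ξ * z ^ p := by
  have hnorm : ∏ i ∈ Ico 1 (p + 1), (σ ^ i) ξ = algebraMap K M a := by
    rw [prod_Ico_eq_prod_range, Nat.add_sub_cancel,
      ← prod_range_pow_apply_pow_apply_eq_algebraMap hN 1]
    refine prod_congr rfl fun k _ => ?_
    rw [← AlgEquiv.mul_apply, ← pow_add, add_comm]
  have hshift :
      σ (weightedOrbitProd σ p ξ) = ∏ i ∈ Ico 1 p, ((σ ^ (i + 1)) ξ) ^ (p - i) := by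
    rw [weightedOrbitProd, map_prod]
    refine prod_congr rfl fun i _ => ?_
    rw [map_pow, pow_succ', AlgEquiv.mul_apply]
  have key := pow_mul_prod_Ico_pow_succ (fun i => (σ ^ i) ξ) p
  rw [hnorm, pow_one, ← hshift] at key
  change _ = _ * weightedOrbitProd σ p ξ at key
  refine ⟨(σ ξ)⁻¹, inv_ne_zero ((map_ne_zero σ).2 hξ), ?_⟩
  rw [← key, inv_pow, mul_comm, inv_mul_cancel_left₀ (pow_ne_zero _ ((map_ne_zero σ).2 hξ))]

theorem prod_range_pow_apply_weightedOrbitProd (hp : Odd p)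
    (hN : ∏ k ∈ range p, (σ ^ k) ξ = algebraMap K M a) :
    ∏ k ∈ range p, (σ ^ k) (weightedOrbitProd σ p ξ) = (algebraMap K M a ^ (p / 2)) ^ p := by
  calc ∏ k ∈ range p, (σ ^ k) (weightedOrbitProd σ p ξ)
      = ∏ i ∈ Ico 1 p, (∏ k ∈ range p, (σ ^ k) ((σ ^ i) ξ)) ^ (p - i) := by
        simp only [weightedOrbitProd, map_prod, map_pow]
        rw [prod_comm]
        simp only [prod_pow]
    _ = algebraMap K M a ^ ∑ i ∈ Ico 1 p, (p - i) := by
        simp only [prod_range_pow_apply_pow_apply_eq_algebraMap hN, prod_pow_eq_pow_sum]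
    _ = (algebraMap K M a ^ (p / 2)) ^ p := by
        rw [Finset.sum_Ico_one_tsub_of_odd hp, mul_comm, pow_mul]

theorem exists_apply_weightedOrbitProd_eq_pow_mul_pow {τ : M ≃ₐ[K] M} {g : ℕ}
    (hσ : σ ^ p = 1) (hrel : τ * σ ^ g = σ * τ) (hg : g.Coprime p) (hξ : ξ ≠ 0) (hτξ : τ ξ = ξ) :
    ∃ w ≠ 0, τ (weightedOrbitProd σ p ξ) = weightedOrbitProd σ p ξ ^ g * w ^ p := by
  have hτ : ∀ k, τ ((σ ^ (g * k % p)) ξ) = (σ ^ k) ξ := by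
    intro k
    rw [← pow_eq_pow_mod _ hσ, pow_mul, ← AlgEquiv.mul_apply, (SemiconjBy.pow_right hrel k).eq,
      AlgEquiv.mul_apply, hτξ]
  have hτb :
      τ (weightedOrbitProd σ p ξ) = ∏ k ∈ Ico 1 p, ((σ ^ k) ξ) ^ (p - g * k % p) := by
    rw [weightedOrbitProd, ← prod_Ico_one_mul_mod hg, map_prod]
    simp only [map_pow, hτ]
  have hbg : weightedOrbitProd σ p ξ ^ g = ∏ k ∈ Ico 1 p, ((σ ^ k) ξ) ^ ((p - k) * g) := by
    simp only [weightedOrbitProd, ← prod_pow, pow_mul]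
  rw [hτb, hbg]
  refine exists_prod_pow_eq_prod_pow_mul_pow (fun k _ => (map_ne_zero _).2 hξ) fun k hk => ?_
  rw [mem_Ico] at hk
  rw [← ZMod.natCast_eq_natCast_iff, Nat.cast_sub (Nat.mod_lt _ (by omega)).le, Nat.cast_mul,
    Nat.cast_sub hk.2.le, ZMod.natCast_mod, ZMod.natCast_self]
  push_cast
  ring

end WeightedOrbitProd

theorem Nat.coprime_of_orderOf_natCast_eq_sub_one {p g : ℕ} (hp : p ≠ 0)
    (hg : orderOf (g : ZMod p) = p - 1) : g.Coprime p := by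
  rcases (by omega : p = 1 ∨ 1 < p) with rfl | hp1
  · exact Nat.coprime_one_right g
  · exact (ZMod.isUnit_iff_coprime g p).1 (orderOf_pos_iff.1 (by omega)).isUnit

theorem stmt_16_general (p : ℕ) (hodd : Odd p) (g : ℕ)
    (hg : orderOf (g : ZMod p) = p - 1)
    (K M : Type*) [Field K] [Field M] [Algebra K M]
    (σ τ : M ≃ₐ[K] M) (hσ : σ ^ p = 1)
    (hrel : τ * σ ^ g = σ * τ)
    (ξ : M) (hξ : ξ ≠ 0) (hτξ : τ ξ = ξ)
    (a : K) (hNa : ∏ i ∈ Finset.range p, (σ ^ i) ξ = algebraMap K M a)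
    (bb : M) (hbb : bb = ∏ i ∈ Finset.Ico 1 p, ((σ ^ i) ξ) ^ (p - i)) :
    (∃ w : M, w ≠ 0 ∧ τ bb = bb ^ g * w ^ p) ∧
    (∃ y : M, σ y = y ∧ ∏ i ∈ Finset.range p, (σ ^ i) bb = y ^ p) ∧
    (∃ z : M, z ≠ 0 ∧ σ bb = algebraMap K M a * bb * z ^ p) := by
  have hgp : g.Coprime p := Nat.coprime_of_orderOf_natCast_eq_sub_one hodd.pos.ne' hg
  subst hbb
  exact ⟨exists_apply_weightedOrbitProd_eq_pow_mul_pow hσ hrel hgp hξ hτξ,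
    ⟨_, by rw [map_pow, AlgEquiv.commutes], prod_range_pow_apply_weightedOrbitProd hodd hNa⟩,
    exists_apply_weightedOrbitProd_eq hξ hNa⟩

/-- (Z/pZ-nonsplit case.)  `M/K` has Galois automorphisms `σ, τ` with `σ^p = 1`,
`τ^{p−1} = 1`, `τσ^g = στ` (`g` a primitive root mod `p`).  If `ξ` lies in the fixed
field `L₂` of `τ` and `N_{L₂/K}(ξ) = ∏_{i<p} σⁱ(ξ) = a`, then
`b = ∏_{i=1}^{p−1} σⁱ(ξ)^{p−i}` satisfies: (1) `τ(b)/b^g ∈ (M×)^p`;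
(2) `N_{M/L₁}(b) ∈ (L₁×)^p` where `L₁` is the fixed field of `σ`;
(3) `σ(b)/(ab) ∈ (M×)^p`. -/
theorem stmt_16 (p : ℕ) (hp : p.Prime) (hodd : Odd p) (g : ℕ)
    (hg : orderOf (g : ZMod p) = p - 1)
    (K M : Type*) [Field K] [CharZero K] [Field M] [Algebra K M]
    (σ τ : M ≃ₐ[K] M) (hσ : σ ^ p = 1) (hτ : τ ^ (p - 1) = 1)
    (hrel : τ * σ ^ g = σ * τ)
    (ξ : M) (hξ : ξ ≠ 0) (hτξ : τ ξ = ξ)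
    (a : K) (hNa : ∏ i ∈ Finset.range p, (σ ^ i) ξ = algebraMap K M a)
    (bb : M) (hbb : bb = ∏ i ∈ Finset.Ico 1 p, ((σ ^ i) ξ) ^ (p - i)) :
    (∃ w : M, w ≠ 0 ∧ τ bb = bb ^ g * w ^ p) ∧
    (∃ y : M, σ y = y ∧ ∏ i ∈ Finset.range p, (σ ^ i) bb = y ^ p) ∧
    (∃ z : M, z ≠ 0 ∧ σ bb = algebraMap K M a * bb * z ^ p) :=
  stmt_16_general p hodd g hg K M σ τ hσ hrel ξ hξ hτξ a hNa bb hbb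
end
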